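/- arXiv:1110.3030 — 2 statements merged into one kernel-verified Lean document; each statement's English description precedes it below -/
import Mathlib

section
/- Let N ≥ 1, q ≥ 1, n ≥ 1 be integers. Let F ∈ ℂ[T, U₁, …, Uₙ, Y] be monic of degree N as a polynomial in Y with coefficients in ℂ[T,U], and assume F(0,U,Y) = ∏_{j=0}^{N−1}(Y − j). Define L_l ∈ ℂ[U₁,…,Uₙ] (1 ≤ l ≤ N) as the coefficient of Y^{N−l} in (∂F/∂T)(0,U,Y), and write F^q = Y^{Nq} + Σ_{κ=1}^{Nq} φ_κ Y^{Nq−κ} with φ_κ ∈ ℂ[T,U]; set Δ_κ := (∂φ_κ/∂T)(0,U) ∈ ℂ[U₁,…,Uₙ]. If L₁, …, L_N are linearly independent over ℂ, then the ℂ-linear span of {Δ₁, …, Δ_{Nq}} in ℂ[U₁,…,Uₙ] has dimension at least N. -/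
open MvPolynomial

/-- Variable index type for `ℂ[T, U₁, …, Uₙ]` : `T` and the `Uᵢ`. -/
abbrev TUVar (n : ℕ) := Unit ⊕ Fin n

/-- Substitution `T := 0` : `ℂ[T,U] → ℂ[U]`. -/
noncomputable def substT0 (n : ℕ) :
    MvPolynomial (TUVar n) ℂ →ₐ[ℂ] MvPolynomial (Fin n) ℂ :=
  aeval (fun v => match v with
    | Sum.inl () => 0
    | Sum.inr i => X i)

noncomputable def Dpoly (n : ℕ) :
    Derivation ℂ (Polynomial (MvPolynomial (TUVar n) ℂ))
      (Polynomial (MvPolynomial (TUVar n) ℂ)) :=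
  PolynomialModule.equivPolynomialSelf.compDer
    (MvPolynomial.pderiv (R := ℂ) (Sum.inl ())).mapCoeffs

lemma Dpoly_coeff (n : ℕ) (p : Polynomial (MvPolynomial (TUVar n) ℂ)) (i : ℕ) :
    (Dpoly n p).coeff i = pderiv (Sum.inl ()) (p.coeff i) := rfl

lemma Dpoly_pow (n : ℕ) (F : Polynomial (MvPolynomial (TUVar n) ℂ)) (q : ℕ) :
    Dpoly n (F ^ (q + 1)) = (q + 1) • (F ^ q * Dpoly n F) := by
  rw [Derivation.leibniz_pow, Nat.add_sub_cancel, smul_eq_mul]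

/-- Let `F ∈ ℂ[T,U][Y]` be monic of degree `N` in `Y` with
`F(0,U,Y) = ∏_{j<N} (Y − j)`.  Let `L_l := (∂/∂T)(coeff of Y^{N−l} of F)|_{T=0}` and,
writing `F^q = Y^{Nq} + Σ_κ φ_κ Y^{Nq−κ}`, let `Δ_κ := (∂φ_κ/∂T)(0,U)`.
If `L₁, …, L_N` are linearly independent over `ℂ`, then the `ℂ`-span of
`{Δ₁, …, Δ_{Nq}}` has dimension at least `N`. -/
theorem statement2 (N q n : ℕ) (hN : 1 ≤ N) (hq : 1 ≤ q) (hn : 1 ≤ n)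
    (F : Polynomial (MvPolynomial (TUVar n) ℂ))
    (hmonic : F.Monic) (hdeg : F.natDegree = N)
    (hF0 : F.map (substT0 n).toRingHom =
      ∏ j ∈ Finset.range N, (Polynomial.X - Polynomial.C ((j : MvPolynomial (Fin n) ℂ))))
    (L : Fin N → MvPolynomial (Fin n) ℂ)
    (hL : ∀ l : Fin N, L l = substT0 n (pderiv (Sum.inl ()) (F.coeff (N - ((l : ℕ) + 1)))))
    (φ : Fin (N * q) → MvPolynomial (TUVar n) ℂ)
    (hφ : ∀ κ : Fin (N * q), φ κ = (F ^ q).coeff (N * q - ((κ : ℕ) + 1)))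
    (Δ : Fin (N * q) → MvPolynomial (Fin n) ℂ)
    (hΔ : ∀ κ : Fin (N * q), Δ κ = substT0 n (pderiv (Sum.inl ()) (φ κ)))
    (hLindep : LinearIndependent ℂ L) :
    N ≤ Module.finrank ℂ (Submodule.span ℂ (Set.range Δ)) := by
  classical
  obtain ⟨q', rfl⟩ : ∃ q', q = q' + 1 := ⟨q - 1, (Nat.succ_pred_eq_of_pos hq).symm⟩
  set σr := (substT0 n).toRingHom with hσr
  set DF : Polynomial (MvPolynomial (Fin n) ℂ) := (Dpoly n F).map σr with hDFdef
  set Q : Polynomial ℂ := ∏ j ∈ Finset.range N, (Polynomial.X - Polynomial.C (j : ℂ)) with hQdef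
  have hQmonic : Q.Monic := Polynomial.monic_prod_of_monic _ _
    (fun j _ => Polynomial.monic_X_sub_C _)
  have hQdeg : Q.natDegree = N := by
    rw [hQdef, Polynomial.natDegree_prod_of_monic _ _
      (fun (i : ℕ) _ => Polynomial.monic_X_sub_C ((i : ℂ)))]
    simp only [Polynomial.natDegree_X_sub_C]
    simp
  have hP0 : F.map σr = Q.map (algebraMap ℂ (MvPolynomial (Fin n) ℂ)) := by
    rw [hF0, hQdef, Polynomial.map_prod]
    refine Finset.prod_congr rfl fun j _ => ?_
    simp [Polynomial.map_sub, map_natCast]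
  -- coefficients of DF
  have hDF1 : ∀ j, j < N → DF.coeff j = L ⟨N - 1 - j, by omega⟩ := by
    intro j hj
    rw [hDFdef, Polynomial.coeff_map, Dpoly_coeff, hL]
    have h2 : N - (↑(⟨N - 1 - j, by omega⟩ : Fin N) + 1) = j := by
      simp only [Fin.val_mk]; omega
    rw [h2]
    rfl
  have hDF2 : ∀ j, N ≤ j → DF.coeff j = 0 := by
    intro j hj
    rw [hDFdef, Polynomial.coeff_map, Dpoly_coeff]
    rcases eq_or_lt_of_le hj with h | h
    · have h3 : F.coeff j = 1 := by
        rw [← h, ← hdeg]; exact hmonic.coeff_natDegree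
      rw [h3, pderiv_one, map_zero]
    · have h3 : F.coeff j = 0 := Polynomial.coeff_eq_zero_of_natDegree_lt (by omega)
      rw [h3, map_zero, map_zero]
  -- Δ formula
  have hDelta : ∀ κ : Fin (N * (q' + 1)),
      Δ κ = (q' + 1) • ∑ k ∈ Finset.range (N * (q' + 1) - (↑κ + 1) + 1),
        (Q ^ q').coeff k • DF.coeff (N * (q' + 1) - (↑κ + 1) - k) := by
    intro κ
    set m := N * (q' + 1) - (↑κ + 1) with hm
    have h1 : Δ κ = σr ((Dpoly n (F ^ (q' + 1))).coeff m) := by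
      rw [hΔ, hφ, Dpoly_coeff]
      rfl
    rw [h1, Dpoly_pow, Polynomial.coeff_smul, map_nsmul]
    congr 1
    rw [Polynomial.coeff_mul, map_sum, Finset.Nat.sum_antidiagonal_eq_sum_range_succ_mk]
    refine Finset.sum_congr rfl fun k _ => ?_
    rw [map_mul, ← Polynomial.coeff_map, ← Polynomial.coeff_map, Polynomial.map_pow, hP0,
      ← Polynomial.map_pow, Polynomial.coeff_map, ← hDFdef, Algebra.smul_def]
  -- main claim: each L l lies in the span of the Δ's
  have key : ∀ l : ℕ, ∀ hl : l < N,
      L ⟨l, hl⟩ ∈ Submodule.span ℂ (Set.range Δ) := by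
    intro l
    induction l using Nat.strong_induction_on with
    | _ l IH =>
    intro hl
    obtain ⟨e, he⟩ : ∃ e, q' * N = e := ⟨_, rfl⟩
    have hNq : N * (q' + 1) = e + N := by rw [← he]; ring
    have hκlt : l < N * (q' + 1) := by omega
    have hκval : ((⟨l, hκlt⟩ : Fin (N * (q' + 1))) : ℕ) = l := rfl
    obtain ⟨m, hmdef⟩ : ∃ m, N * (q' + 1) - (l + 1) = m := ⟨_, rfl⟩
    have hme : m = e + (N - (l + 1)) := by omega
    -- degree facts about Q ^ q'
    have hQq'deg : (Q ^ q').natDegree = e := by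
      rw [hQmonic.natDegree_pow, hQdeg, he]
    have hce : (Q ^ q').coeff e = 1 := by
      rw [← hQq'deg]; exact (hQmonic.pow q').coeff_natDegree
    have hczero : ∀ k, e < k → (Q ^ q').coeff k = 0 := fun k hk =>
      Polynomial.coeff_eq_zero_of_natDegree_lt (by rw [hQq'deg]; omega)
    have hemem : e ∈ Finset.range (m + 1) := Finset.mem_range.2 (by omega)
    have hsplit := Finset.add_sum_erase (Finset.range (m + 1))
      (fun k => (Q ^ q').coeff k • DF.coeff (m - k)) hemem
    have hDκ := hDelta ⟨l, hκlt⟩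
    rw [hκval, hmdef, ← hsplit] at hDκ
    beta_reduce at hDκ
    have hmain : DF.coeff (m - e) = L ⟨l, hl⟩ := by
      have h2 : m - e < N := by omega
      rw [hDF1 _ h2]
      exact congrArg L (Fin.ext (by simp only [Fin.val_mk]; omega))
    have hrest : ∑ k ∈ (Finset.range (m + 1)).erase e,
        (Q ^ q').coeff k • DF.coeff (m - k) ∈ Submodule.span ℂ (Set.range Δ) := by
      refine Submodule.sum_mem _ fun k hk => ?_
      rcases Finset.mem_erase.1 hk with ⟨hne, hkr⟩
      have hkr' : k < m + 1 := Finset.mem_range.1 hkr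
      rcases lt_or_gt_of_ne hne with hklt | hkgt
      · -- k < e : lower-order terms
        by_cases hbig : N ≤ m - k
        · rw [hDF2 _ hbig, smul_zero]; exact Submodule.zero_mem _
        · push_neg at hbig
          rw [hDF1 _ hbig]
          refine Submodule.smul_mem _ _ ?_
          have hidx : N - 1 - (m - k) < l := by omega
          have hidx2 : N - 1 - (m - k) < N := by omega
          exact IH _ hidx hidx2
      · rw [hczero _ hkgt, zero_smul]; exact Submodule.zero_mem _
    -- solve for L ⟨l, hl⟩
    have hc0 : ((q' + 1 : ℕ) : ℂ) ≠ 0 := Nat.cast_ne_zero.2 (Nat.succ_ne_zero q')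
    have hfinal : L ⟨l, hl⟩ = ((q' + 1 : ℕ) : ℂ)⁻¹ • Δ ⟨l, hκlt⟩ -
        ∑ k ∈ (Finset.range (m + 1)).erase e,
          (Q ^ q').coeff k • DF.coeff (m - k) := by
      rw [hDκ, hce, hmain, one_smul, ← Nat.cast_smul_eq_nsmul ℂ, smul_smul,
        inv_mul_cancel₀ hc0, one_smul, add_sub_cancel_right]
    rw [hfinal]
    exact Submodule.sub_mem _
      (Submodule.smul_mem _ _ (Submodule.subset_span ⟨_, rfl⟩)) hrest
  -- conclude via linear independence
  have hsub : ∀ i : Fin N, L i ∈ Submodule.span ℂ (Set.range Δ) := by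
    intro i
    have := key i.1 i.2
    simpa using this
  let L' : Fin N → (Submodule.span ℂ (Set.range Δ)) := fun i => ⟨L i, hsub i⟩
  have hL'indep : LinearIndependent ℂ L' := by
    have h : L = (Submodule.span ℂ (Set.range Δ)).subtype ∘ L' := rfl
    rw [h] at hLindep
    exact LinearIndependent.of_comp _ hLindep
  have hfin : Module.Finite ℂ (Submodule.span ℂ (Set.range Δ)) :=
    FiniteDimensional.span_of_finite ℂ (Set.finite_range Δ)
  simpa using hL'indep.fintype_card_le_finrank
end

section
/- Let n, K ≥ 1 and let θ₁, …, θ_K ∈ ℂ[T, U₁, …, Uₙ] be polynomials such that each θ_k(0, U) (obtained by substituting T = 0) is a constant. Let A be the ℂ-subalgebra of ℂ[T,U₁,…,Uₙ] generated by θ₁, …, θ_K. Let μ ∈ ℂ[T,U₁,…,Uₙ] and suppose there exist an integer s ≥ 1 and elements a₀, a₁, …, a_s ∈ A with a₀(0,U) ≠ 0 such that a₀ μ^s + a₁ μ^{s−1} + ⋯ + a_s = 0 in ℂ[T,U]. Then μ(0, U) is a constant polynomial. -/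
open MvPolynomial

/-- Let `θ₁,…,θ_K ∈ ℂ[T,U]` with all `θ_k(0,U)` constant, and let
`A` be the `ℂ`-subalgebra generated by the `θ_k`.  If `μ ∈ ℂ[T,U]` satisfies a relation
`a₀ μ^s + a₁ μ^{s−1} + ⋯ + a_s = 0` with `s ≥ 1`, all `a_i ∈ A` and `a₀(0,U) ≠ 0`,
then `μ(0,U)` is a constant polynomial. -/
theorem statement4 (n K : ℕ) (hn : 1 ≤ n) (hK : 1 ≤ K)
    (θ : Fin K → MvPolynomial (TUVar n) ℂ)
    (hθ : ∀ k : Fin K, ∃ c : ℂ, substT0 n (θ k) = C c)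
    (μ : MvPolynomial (TUVar n) ℂ)
    (s : ℕ) (hs : 1 ≤ s)
    (a : Fin (s + 1) → MvPolynomial (TUVar n) ℂ)
    (ha : ∀ i, a i ∈ Algebra.adjoin ℂ (Set.range θ))
    (ha0 : substT0 n (a 0) ≠ 0)
    (hrel : ∑ i : Fin (s + 1), a i * μ ^ (s - (i : ℕ)) = 0) :
    ∃ c : ℂ, substT0 n μ = C c := by
  -- Step 1: each `substT0 (a i)` is a constant.
  have hconst : ∀ i, ∃ c : ℂ, substT0 n (a i) = C c := by
    intro i
    have h1 : substT0 n (a i) ∈ (Algebra.adjoin ℂ (Set.range θ)).map (substT0 n) :=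
      Subalgebra.mem_map.mpr ⟨a i, ha i, rfl⟩
    rw [AlgHom.map_adjoin] at h1
    have h2 : (substT0 n) '' Set.range θ ⊆ (⊥ : Subalgebra ℂ (MvPolynomial (Fin n) ℂ)) := by
      rintro x ⟨y, ⟨k, rfl⟩, rfl⟩
      obtain ⟨d, hd⟩ := hθ k
      rw [hd]
      exact Algebra.mem_bot.mpr ⟨d, rfl⟩
    have h3 := Algebra.adjoin_le h2 h1
    obtain ⟨d, hd⟩ := Algebra.mem_bot.mp h3
    exact ⟨d, hd.symm⟩
  choose c hc using hconst
  set m : MvPolynomial (Fin n) ℂ := substT0 n μ with hm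
  have hc0 : c 0 ≠ 0 := by
    intro h
    apply ha0
    rw [hc 0, h, map_zero]
  -- Step 2: the relation in `ℂ[U]`.
  have h0 : ∑ i : Fin (s + 1), C (c i) * m ^ (s - (i : ℕ)) = 0 := by
    have := congrArg (substT0 n) hrel
    simp only [map_sum, map_mul, map_pow, map_zero] at this
    simpa only [hc] using this
  -- Step 3: package as a one-variable polynomial.
  set q : Polynomial ℂ := ∑ i : Fin (s + 1), Polynomial.C (c i) * Polynomial.X ^ (s - (i : ℕ))
    with hqdef
  have haq : Polynomial.aeval m q = 0 := by
    rw [hqdef]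
    simp only [map_sum, map_mul, map_pow, Polynomial.aeval_C, Polynomial.aeval_X,
      MvPolynomial.algebraMap_eq]
    exact h0
  have hcoeff : q.coeff s = c 0 := by
    rw [hqdef, Polynomial.finset_sum_coeff,
      Finset.sum_eq_single (0 : Fin (s + 1))]
    · simp
    · intro i _ hi
      have hile : (i : ℕ) ≤ s := Nat.lt_succ_iff.mp i.isLt
      have hipos : 0 < (i : ℕ) := by
        rcases Nat.eq_zero_or_pos (i : ℕ) with h | h
        · exact absurd (Fin.ext h) hi
        · exact h
      have hne : s - (i : ℕ) ≠ s := by omega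
      simp only [Polynomial.coeff_C_mul, Polynomial.coeff_X_pow]
      rw [if_neg (fun h => hne h.symm), mul_zero]
    · simp
  have hq0 : q ≠ 0 := fun h => hc0 (by rw [← hcoeff, h, Polynomial.coeff_zero])
  -- Step 4: split `q` over `ℂ` and conclude in the domain `ℂ[U]`.
  have hsplit := Polynomial.Splits.eq_prod_roots (f := q)
    (IsAlgClosed.splits q)
  rw [hsplit] at haq
  rw [map_mul, Polynomial.aeval_C, map_multiset_prod, Multiset.map_map] at haq
  rcases mul_eq_zero.mp haq with h | h
  · exact absurd h (by
      simp only [MvPolynomial.algebraMap_eq, Ne, MvPolynomial.C_eq_zero]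
      exact Polynomial.leadingCoeff_ne_zero.mpr hq0)
  · obtain ⟨x, hxmem, hx⟩ := Multiset.mem_map.mp ((Multiset.prod_eq_zero_iff).mp h)
    refine ⟨x, ?_⟩
    simp only [Function.comp_apply, map_sub, Polynomial.aeval_X, Polynomial.aeval_C,
      MvPolynomial.algebraMap_eq] at hx
    have := sub_eq_zero.mp hx
    exact this
end
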